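/- With x_{0,z} = ν_0^{⊗z} and x_{z,z} = ν_1^{⊗z} in X^{⊗z}, the identity [z-k]!·F^k(x_{0,z}) = [k]!·E^{z-k}(x_{z,z}) holds for all 0 ≤ k ≤ z, where E and F act via the iterated coproducts. -/

import Mathlib

/-- The quantum integer `[k] = (q^k - q^{-k})/(q - q^{-1})`. -/
noncomputable def qint (q : ℂ) (k : ℤ) : ℂ := (q ^ k - q ^ (-k)) / (q - q⁻¹)

/-- The quantum factorial `[n]! = [1][2]⋯[n]`. -/
noncomputable def qfact (q : ℂ) (n : ℕ) : ℂ := ∏ j ∈ Finset.range n, qint q (j + 1)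

/-- The `z`-fold tensor power `X^{⊗z}` of `X = ℂ²`, realized as functions on bit strings:
`v s` is the coefficient of the basis tensor `ν_{s 0} ⊗ ⋯ ⊗ ν_{s (z-1)}`. -/
abbrev V (z : ℕ) := (Fin z → Fin 2) → ℂ

/-- The basis vector of `V z` corresponding to the bit string `t`. -/
def bvec (z : ℕ) (t : Fin z → Fin 2) : V z := fun s => if s = t then 1 else 0

/-- The action of `E` on `X^{⊗z}` via the iterated coproduct
`Δ^{z-1}(E) = Σᵢ 1^{⊗i} ⊗ E ⊗ K^{⊗(z-1-i)}`, where `E ν₁ = ν₀`, `E ν₀ = 0`,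
`K ν_a = q^{1-2a} ν_a`. -/
noncomputable def Eop (q : ℂ) (z : ℕ) (v : V z) : V z := fun s =>
  ∑ i : Fin z, if s i = 0 then
    (∏ j ∈ Finset.univ.filter (fun j => i < j), q ^ ((1 : ℤ) - 2 * ((s j : ℕ) : ℤ))) *
      v (Function.update s i 1)
  else 0

/-- The action of `F` on `X^{⊗z}` via the iterated coproduct
`Δ^{z-1}(F) = Σᵢ (K⁻¹)^{⊗i} ⊗ F ⊗ 1^{⊗(z-1-i)}`, where `F ν₀ = ν₁`, `F ν₁ = 0`,
`K⁻¹ ν_a = q^{2a-1} ν_a`. -/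
noncomputable def Fop (q : ℂ) (z : ℕ) (v : V z) : V z := fun s =>
  ∑ i : Fin z, if s i = 1 then
    (∏ j ∈ Finset.univ.filter (fun j => j < i), q ^ (-((1 : ℤ) - 2 * ((s j : ℕ) : ℤ)))) *
      v (Function.update s i 0)
  else 0

/-- The action of `K` on `X^{⊗z}` via `Δ^{z-1}(K) = K^{⊗z}`. -/
noncomputable def Kop (q : ℂ) (z : ℕ) (v : V z) : V z := fun s =>
  (∏ j, q ^ ((1 : ℤ) - 2 * ((s j : ℕ) : ℤ))) * v s


/-!
Expanding `F^k(ν₀^{⊗z})` one factor of `F` at a time, the tensor `ν_s` with `k` copies of `ν₁`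
receives the coefficient `[k]! q^{C(k,2) - Σ pos}`, where `Σ pos` is the sum of the positions of
the `ν₁`'s: removing the `ν₁` of rank `r` at position `i` costs `q^{2r - i}`, and
`Σ_{r < k} q^{2r} = q^{k-1} [k]`. Reversing the order of the tensor factors and swapping
`ν₀ ↔ ν₁` turns `F` into `E` and `ν₀^{⊗z}` into `ν₁^{⊗z}`, so `E^{z-k}(ν₁^{⊗z})` is given by the
same formula read on the transformed bit string; both exponents equal minus the number of pairs
`ν₀` before `ν₁`.
-/

open Finset

lemma prod_zpow_eq_zpow_sum {ι G₀ : Type*} [CommGroupWithZero G₀] {a : G₀} (ha : a ≠ 0)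
    (s : Finset ι) (f : ι → ℤ) : ∏ i ∈ s, a ^ f i = a ^ ∑ i ∈ s, f i := by
  induction s using Finset.cons_induction with
  | empty => simp
  | cons i s _ ih => rw [prod_cons, sum_cons, ih, zpow_add₀ ha]

lemma sum_card_filter_lt {α M : Type*} [LinearOrder α] [AddCommMonoid M] (S : Finset α)
    (f : ℕ → M) : ∑ i ∈ S, f #{j ∈ S | j < i} = ∑ m ∈ range #S, f m := by
  induction S using Finset.induction_on_max with
  | empty => simp
  | insert a T ha ih =>
    have haT : a ∉ T := fun h => lt_irrefl a (ha a h)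
    have h_a : {j ∈ insert a T | j < a} = T := by
      ext j
      simp only [mem_filter, mem_insert]
      exact ⟨fun ⟨h, hj⟩ => h.resolve_left hj.ne, fun h => ⟨Or.inr h, ha j h⟩⟩
    have h_T : ∀ i ∈ T, {j ∈ insert a T | j < i} = {j ∈ T | j < i} := fun i hi => by
      rw [filter_insert, if_neg (ha i hi).not_gt]
    rw [sum_insert haT, h_a, sum_congr rfl fun i hi => by rw [h_T i hi], ih,
      card_insert_of_notMem haT, sum_range_succ, add_comm]

lemma sum_range_zpow_two_mul {q : ℂ} (hq : q ≠ 0) (hq1 : q ^ 2 ≠ 1) (n : ℕ) :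
    ∑ m ∈ range n, q ^ (2 * (m : ℤ)) = q ^ ((n : ℤ) - 1) * qint q n := by
  have hq1' : q ^ 2 - 1 ≠ 0 := sub_ne_zero.2 hq1
  have hd : q - q⁻¹ ≠ 0 := by
    rw [show q - q⁻¹ = (q ^ 2 - 1) / q by field_simp]
    exact div_ne_zero hq1' hq
  simp_rw [zpow_mul, zpow_natCast, zpow_ofNat]
  rw [geom_sum_eq hq1, qint, zpow_sub_one₀ hq, zpow_neg, zpow_natCast, ← pow_mul, mul_comm 2 n,
    pow_mul]
  field_simp

namespace BitString

variable {z : ℕ}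

def ones (s : Fin z → Fin 2) : Finset (Fin z) := {i | s i = 1}

lemma mem_ones {s : Fin z → Fin 2} {i : Fin z} : i ∈ ones s ↔ s i = 1 := by simp [ones]

lemma ones_eq_empty_iff {s : Fin z → Fin 2} : ones s = ∅ ↔ s = fun _ => 0 := by
  simp only [eq_empty_iff_forall_notMem, mem_ones, funext_iff]
  exact forall_congr' fun i => by omega

lemma ones_update_zero (s : Fin z → Fin 2) (i : Fin z) :
    ones (Function.update s i 0) = (ones s).erase i := by
  ext j
  rcases eq_or_ne j i with rfl | h <;> simp [mem_ones, Function.update_of_ne, *]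

lemma sum_val_eq_card_filter_eq_one (s : Fin z → Fin 2) (t : Finset (Fin z)) :
    ∑ j ∈ t, ((s j : ℕ) : ℤ) = #{j ∈ t | s j = 1} := by
  rw [natCast_card_filter]
  refine sum_congr rfl fun j _ => ?_
  rcases (by omega : s j = 0 ∨ s j = 1) with h | h <;> simp [h]

def dual (s : Fin z → Fin 2) : Fin z → Fin 2 := fun i => Fin.rev (s (Fin.rev i))

lemma dual_update (s : Fin z → Fin 2) (i : Fin z) (a : Fin 2) :
    dual (Function.update s i a) = Function.update (dual s) i.rev a.rev := by
  ext j
  rcases eq_or_ne j i.rev with rfl | h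
  · simp [dual]
  · simp [dual, h, Function.update_of_ne, Fin.rev_eq_iff]

lemma ones_dual (s : Fin z → Fin 2) : ones (dual s) = (ones s)ᶜ.map Fin.revPerm.toEmbedding := by
  ext i
  simp only [mem_ones, dual, Fin.rev_eq_iff, mem_map_equiv, mem_compl, Fin.revPerm_symm,
    Fin.revPerm_apply]
  change s i.rev = 0 ↔ _
  omega

lemma card_ones_dual_add_card_ones (s : Fin z → Fin 2) : #(ones (dual s)) + #(ones s) = z := by
  rw [ones_dual, card_map, card_compl_add_card, Fintype.card_fin]

lemma choose_two_sub_sum_ones_dual (s : Fin z → Fin 2) :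
    ((#(ones (dual s))).choose 2 : ℤ) - ∑ i ∈ ones (dual s), (i : ℤ) =
      (#(ones s)).choose 2 - ∑ i ∈ ones s, (i : ℤ) := by
  rw [ones_dual, card_map, sum_map]
  set S := ones s
  have h_card : ((z : ℕ) : ℚ) = #S + #Sᶜ := by
    rw [← Nat.cast_add, card_add_card_compl, Fintype.card_fin]
  have h_total : ∑ i ∈ S, (i : ℤ) + ∑ i ∈ Sᶜ, (i : ℤ) = z.choose 2 := by
    rw [sum_add_sum_compl, Fin.sum_univ_eq_sum_range (fun i => (i : ℤ)), ← Nat.cast_sum,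
      sum_range_id, Nat.choose_two_right]
  have h_rev : ∑ i ∈ Sᶜ, ((i.rev : ℕ) : ℤ) = #Sᶜ * ((z : ℤ) - 1) - ∑ i ∈ Sᶜ, (i : ℤ) := by
    rw [← nsmul_eq_mul, ← sum_const, ← sum_sub_distrib]
    refine sum_congr rfl fun i _ => ?_
    rw [Fin.val_rev]
    omega
  simp only [Equiv.coe_toEmbedding, Fin.revPerm_apply, h_rev]
  qify at h_total ⊢
  simp only [Nat.cast_choose_two] at h_total ⊢
  linear_combination h_total + ((z + #S + #Sᶜ) / 2 - 1 / 2 - #Sᶜ : ℚ) * h_card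

end BitString

open BitString

section

variable {z : ℕ}

lemma Fop_apply {q : ℂ} (hq : q ≠ 0) (v : V z) (s : Fin z → Fin 2) :
    Fop q z v s = ∑ i ∈ ones s,
      q ^ (2 * (#{j ∈ ones s | j < i} : ℤ) - i) * v (Function.update s i 0) := by
  rw [Fop, ones, sum_filter]
  refine sum_congr rfl fun i _ => ?_
  split_ifs with hi
  · rw [prod_zpow_eq_zpow_sum hq]
    congr 2
    have h_card : #{j : Fin z | j < i} = (i : ℕ) := by
      rw [filter_gt_eq_Iio, Fin.card_Iio]
    simp only [neg_sub, sum_sub_distrib, ← mul_sum, sum_val_eq_card_filter_eq_one, sum_const,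
      h_card, filter_filter, and_comm, nsmul_eq_mul, mul_one]
  · rfl

lemma Fop_iterate_bvec_zero_apply {q : ℂ} (hq : q ≠ 0) (hq1 : q ^ 2 ≠ 1) (k : ℕ)
    (s : Fin z → Fin 2) :
    (Fop q z)^[k] (bvec z fun _ => 0) s =
      if #(ones s) = k then qfact q k * q ^ ((k.choose 2 : ℤ) - ∑ i ∈ ones s, (i : ℤ)) else 0 := by
  induction k generalizing s with
  | zero =>
    simp only [Function.iterate_zero_apply, bvec, card_eq_zero, ← ones_eq_empty_iff]
    split_ifs with h <;> simp [h, qfact]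
  | succ k ih =>
    rw [Function.iterate_succ_apply', Fop_apply hq]
    simp only [ih, ones_update_zero]
    by_cases hk : #(ones s) = k + 1
    · have h_term : ∀ i ∈ ones s,
          q ^ (2 * (#{j ∈ ones s | j < i} : ℤ) - i) * (if #((ones s).erase i) = k then
            qfact q k * q ^ ((k.choose 2 : ℤ) - ∑ j ∈ (ones s).erase i, (j : ℤ)) else 0) =
          qfact q k * q ^ ((k.choose 2 : ℤ) - ∑ j ∈ ones s, (j : ℤ)) *
            q ^ (2 * (#{j ∈ ones s | j < i} : ℕ) : ℤ) := fun i hi => by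
        rw [card_erase_of_mem hi, hk, if_pos (Nat.add_sub_cancel k 1), sum_erase_eq_sub hi,
          mul_left_comm, mul_assoc, ← zpow_add₀ hq, ← zpow_add₀ hq]
        ring_nf
      rw [if_pos hk, sum_congr rfl h_term, ← mul_sum,
        sum_card_filter_lt (ones s) fun m => q ^ (2 * (m : ℤ)), sum_range_zpow_two_mul hq hq1, hk,
        qfact, qfact, prod_range_succ, Nat.choose_succ_succ', Nat.choose_one_right,
        show ((k + k.choose (1 + 1) : ℕ) : ℤ) - ∑ i ∈ ones s, (i : ℤ) =
          ((k.choose 2 : ℤ) - ∑ i ∈ ones s, (i : ℤ)) + (((k + 1 : ℕ) : ℤ) - 1) by push_cast; ring,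
        zpow_add₀ hq]
      push_cast
      ring
    · rw [if_neg hk]
      refine sum_eq_zero fun i hi => ?_
      have : 0 < #(ones s) := card_pos.2 ⟨i, hi⟩
      rw [card_erase_of_mem hi, if_neg (by omega), mul_zero]

lemma Fop_semiconj_dual (q : ℂ) :
    Function.Semiconj (fun (v : V z) s => v (dual s)) (Fop q z) (Eop q z) := by
  intro v
  funext s
  refine Fintype.sum_equiv Fin.revPerm _ _ fun i => ?_
  have h_rev_eq_one (a : Fin 2) : a.rev = 1 ↔ a = 0 := by rw [Fin.rev_eq_iff]; rfl
  have h_weight : ∏ j with j < i, q ^ (-(1 - 2 * ((dual s j : ℕ) : ℤ))) =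
      ∏ j with i.rev < j, q ^ (1 - 2 * ((s j : ℕ) : ℤ)) := by
    refine prod_equiv Fin.revPerm (fun j => by simp [Fin.rev_lt_rev]) fun j _ => ?_
    rcases (by omega : s j.rev = 0 ∨ s j.rev = 1) with h | h <;> simp [dual, h]
  simp only [Fin.revPerm_apply, dual_update, Fin.rev_rev, h_weight]
  simp [dual, h_rev_eq_one]

lemma bvec_one_eq_bvec_zero_dual :
    bvec z (fun _ => 1) = fun s => bvec z (fun _ => 0) (dual s) := by
  funext s
  simp only [bvec, funext_iff, dual, Fin.rev_eq_iff]
  congr 1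
  exact propext ⟨fun h x => h x.rev, fun h x => by simpa using h x.rev⟩

lemma Eop_iterate_bvec_one (q : ℂ) (m : ℕ) :
    (Eop q z)^[m] (bvec z fun _ => 1) = fun s => (Fop q z)^[m] (bvec z fun _ => 0) (dual s) := by
  rw [bvec_one_eq_bvec_zero_dual]
  exact ((Fop_semiconj_dual q).iterate_right m _).symm

end

theorem F_pow_eq_E_pow_general (q : ℂ) (hq0 : q ≠ 0) (hq1 : q ^ 2 ≠ 1)
    (z k : ℕ) (hk : k ≤ z) :
    qfact q (z - k) • (Fop q z)^[k] (bvec z (fun _ => 0)) =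
      qfact q k • (Eop q z)^[z - k] (bvec z (fun _ => 1)) := by
  funext s
  have h_card := card_ones_dual_add_card_ones s
  simp only [Eop_iterate_bvec_one, Pi.smul_apply, smul_eq_mul,
    Fop_iterate_bvec_zero_apply hq0 hq1]
  by_cases h : #(ones s) = k
  · subst h
    have h_dual : #(ones (dual s)) = z - #(ones s) := by omega
    rw [if_pos rfl, if_pos h_dual, ← h_dual, choose_two_sub_sum_ones_dual]
    ring
  · rw [if_neg h, if_neg (by omega), mul_zero, mul_zero]

/-- `[z-k]!·F^k(ν₀^{⊗z}) = [k]!·E^{z-k}(ν₁^{⊗z})` for `0 ≤ k ≤ z`. -/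
theorem F_pow_eq_E_pow (q : ℂ) (hq0 : q ≠ 0) (hq1 : q ^ 2 ≠ 1)
    (z k : ℕ) (hk : k ≤ z)
    (hqi : ∀ j : ℕ, 1 ≤ j → j ≤ z → qint q j ≠ 0) :
    qfact q (z - k) • (Fop q z)^[k] (bvec z (fun _ => 0)) =
      qfact q k • (Eop q z)^[z - k] (bvec z (fun _ => 1)) :=
  F_pow_eq_E_pow_general q hq0 hq1 z k hk
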